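/- The generalised energy e(v,u) := (d/2)·λ_max(v⊗v − u) is a convex function of (v,u) ∈ ℝ^d × S₀^d. -/

import Mathlib

/-!
For a symmetric matrix `A` of positive size and `c : ℝ`, `λ_max(A) ≤ c` exactly when
`xᵀ A x ≤ c ‖x‖²` for all `x`:
once the spectrum of `A` lies below `c`, the matrix `c - A` is positive semidefinite. So
`λ_max(v ⊗ v - u)` is the supremum over unit vectors `x` of `(v ⬝ x)² - xᵀ u x`, each of which is
convex in `(v, u)`, and a supremum of convex functions is convex.
-/

/-- The largest eigenvalue of a real symmetric matrix. -/
noncomputable def lambdaMax {d : ℕ} (A : Matrix (Fin d) (Fin d) ℝ) : ℝ :=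
  sSup {μ : ℝ | ∃ x : Fin d → ℝ, x ≠ 0 ∧ A.mulVec x = μ • x}

/-- The generalised energy `e(v,u) = (d/2) λ_max(v ⊗ v - u)`. -/
noncomputable def genE {d : ℕ} (v : Fin d → ℝ) (u : Matrix (Fin d) (Fin d) ℝ) : ℝ :=
  ((d : ℝ) / 2) * lambdaMax (Matrix.vecMulVec v v - u)

open Matrix Module.End

namespace Matrix

variable {K n : Type*} [Field K] [Fintype n] [DecidableEq n]

theorem setOf_exists_mulVec_eq_smul_eq_spectrum (A : Matrix n n K) :
    {μ : K | ∃ x : n → K, x ≠ 0 ∧ A *ᵥ x = μ • x} = spectrum K A := by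
  ext μ
  rw [← spectrum_toLin', ← hasEigenvalue_iff_mem_spectrum]
  constructor
  · rintro ⟨x, hx, hAx⟩
    exact hasEigenvalue_of_hasEigenvector ⟨mem_eigenspace_iff.2 hAx, hx⟩
  · intro h
    obtain ⟨x, hx, hx0⟩ := h.exists_hasEigenvector
    exact ⟨x, hx0, mem_eigenspace_iff.1 hx⟩

theorem dotProduct_mulVec_le_of_spectrum_le {A : Matrix n n ℝ} (hA : A.IsHermitian) {c : ℝ}
    (hc : ∀ μ ∈ spectrum ℝ A, μ ≤ c) (x : n → ℝ) : x ⬝ᵥ A *ᵥ x ≤ c * (x ⬝ᵥ x) := by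
  have hpsd : (algebraMap ℝ (Matrix n n ℝ) c - A).PosSemidef := by
    refine posSemidef_iff_isHermitian_and_spectrum_nonneg.2
      ⟨(isHermitian_diagonal _).sub hA, ?_⟩
    rw [← spectrum.singleton_sub_eq]
    rintro _ ⟨_, rfl, μ, hμ, rfl⟩
    exact sub_nonneg.2 (hc μ hμ)
  simpa [Algebra.algebraMap_eq_smul_one, sub_mulVec, smul_mulVec, dotProduct_sub] using
    hpsd.dotProduct_mulVec_nonneg x

theorem le_of_mem_spectrum_of_dotProduct_mulVec_le {A : Matrix n n ℝ} {c : ℝ}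
    (hc : ∀ x, x ⬝ᵥ A *ᵥ x ≤ c * (x ⬝ᵥ x)) {μ : ℝ} (hμ : μ ∈ spectrum ℝ A) : μ ≤ c := by
  obtain ⟨x, hx, hAx⟩ := (setOf_exists_mulVec_eq_smul_eq_spectrum A).symm ▸ hμ
  have hx' := hc x
  rw [hAx, dotProduct_smul, smul_eq_mul] at hx'
  exact le_of_mul_le_mul_right hx' (by simpa using dotProduct_star_self_pos_iff.2 hx)

end Matrix

section lambdaMax

variable {d : ℕ} {A : Matrix (Fin d) (Fin d) ℝ}

theorem lambdaMax_eq_sSup_spectrum (A : Matrix (Fin d) (Fin d) ℝ) :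
    lambdaMax A = sSup (spectrum ℝ A) := by
  rw [lambdaMax, ← setOf_exists_mulVec_eq_smul_eq_spectrum]

theorem dotProduct_mulVec_le_lambdaMax_mul (hA : A.IsHermitian) (x : Fin d → ℝ) :
    x ⬝ᵥ A *ᵥ x ≤ lambdaMax A * (x ⬝ᵥ x) := by
  refine dotProduct_mulVec_le_of_spectrum_le hA (fun μ hμ => ?_) x
  rw [lambdaMax_eq_sSup_spectrum]
  exact le_csSup A.finite_real_spectrum.bddAbove hμ

theorem lambdaMax_le_of_forall_dotProduct_mulVec_le [NeZero d] (hA : A.IsHermitian) {c : ℝ}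
    (hc : ∀ x, x ⬝ᵥ A *ᵥ x ≤ c * (x ⬝ᵥ x)) : lambdaMax A ≤ c := by
  rw [lambdaMax_eq_sSup_spectrum]
  exact csSup_le ⟨_, hA.eigenvalues_mem_spectrum_real 0⟩ fun μ hμ =>
    le_of_mem_spectrum_of_dotProduct_mulVec_le hc hμ

end lambdaMax

section energy

variable {n : Type*}

theorem isHermitian_vecMulVec_self_sub (v : n → ℝ) {u : Matrix n n ℝ} (hu : u.IsSymm) :
    (vecMulVec v v - u).IsHermitian :=
  isHermitian_iff_isSymm.2 <| by simp [IsSymm, hu.eq]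

theorem dotProduct_vecMulVec_self_sub_mulVec [Fintype n] {R : Type*} [CommRing R] (v : n → R)
    (u : Matrix n n R) (x : n → R) :
    x ⬝ᵥ (vecMulVec v v - u) *ᵥ x = (v ⬝ᵥ x) ^ 2 - x ⬝ᵥ u *ᵥ x := by
  simp [sub_mulVec, vecMulVec_mulVec, dotProduct_sub, dotProduct_comm x v, sq]

theorem convex_setOf_isSymm {E : Type*} [AddCommMonoid E] [Module ℝ E] :
    Convex ℝ {p : E × Matrix n n ℝ | p.2.IsSymm} :=
  fun _ hp _ hq _ _ _ _ _ => (hp.smul _).add (hq.smul _)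

end energy

theorem convexOn_lambdaMax_vecMulVec_self_sub {d : ℕ} [NeZero d] :
    ConvexOn ℝ {p : (Fin d → ℝ) × Matrix (Fin d) (Fin d) ℝ | p.2.IsSymm}
      fun p => lambdaMax (vecMulVec p.1 p.1 - p.2) := by
  refine ⟨convex_setOf_isSymm, ?_⟩
  rintro ⟨v₁, u₁⟩ hu₁ ⟨v₂, u₂⟩ hu₂ a b ha hb hab
  refine lambdaMax_le_of_forall_dotProduct_mulVec_le
    (isHermitian_vecMulVec_self_sub _ ((hu₁.smul a).add (hu₂.smul b))) fun x => ?_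
  have h₁ := dotProduct_mulVec_le_lambdaMax_mul (isHermitian_vecMulVec_self_sub v₁ hu₁) x
  have h₂ := dotProduct_mulVec_le_lambdaMax_mul (isHermitian_vecMulVec_self_sub v₂ hu₂) x
  simp only [dotProduct_vecMulVec_self_sub_mulVec] at h₁ h₂ ⊢
  have hsq : ((a • v₁ + b • v₂) ⬝ᵥ x) ^ 2 ≤ a * (v₁ ⬝ᵥ x) ^ 2 + b * (v₂ ⬝ᵥ x) ^ 2 := by
    simpa [add_dotProduct] using
      (Even.convexOn_pow even_two).2 (Set.mem_univ (v₁ ⬝ᵥ x)) (Set.mem_univ (v₂ ⬝ᵥ x)) ha hb hab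
  simp only [Prod.smul_mk, Prod.mk_add_mk, add_mulVec, smul_mulVec, dotProduct_add,
    dotProduct_smul, smul_eq_mul]
  linarith [mul_le_mul_of_nonneg_left h₁ ha, mul_le_mul_of_nonneg_left h₂ hb]

theorem stmt_1_general {d : ℕ}
    (v₁ v₂ : Fin d → ℝ) (u₁ u₂ : Matrix (Fin d) (Fin d) ℝ)
    (hu₁s : u₁.IsSymm) (hu₂s : u₂.IsSymm)
    (t : ℝ) (ht₀ : 0 ≤ t) (ht₁ : t ≤ 1) :
    genE (t • v₁ + (1 - t) • v₂) (t • u₁ + (1 - t) • u₂)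
      ≤ t * genE v₁ u₁ + (1 - t) * genE v₂ u₂ := by
  obtain rfl | hd := d.eq_zero_or_pos
  · simp [genE]
  have : NeZero d := NeZero.of_pos hd
  have hconvex := (convexOn_lambdaMax_vecMulVec_self_sub (d := d)).smul
    (by positivity : 0 ≤ (d : ℝ) / 2)
  simpa [genE, mul_left_comm t, mul_left_comm (1 - t)] using
    hconvex.2 (x := (v₁, u₁)) hu₁s (y := (v₂, u₂)) hu₂s ht₀ (sub_nonneg.2 ht₁) (add_sub_cancel t 1)

theorem stmt_1 {d : ℕ} (hd : 2 ≤ d)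
    (v₁ v₂ : Fin d → ℝ) (u₁ u₂ : Matrix (Fin d) (Fin d) ℝ)
    (hu₁s : u₁.IsSymm) (hu₂s : u₂.IsSymm)
    (hu₁t : u₁.trace = 0) (hu₂t : u₂.trace = 0)
    (t : ℝ) (ht₀ : 0 ≤ t) (ht₁ : t ≤ 1) :
    genE (t • v₁ + (1 - t) • v₂) (t • u₁ + (1 - t) • u₂)
      ≤ t * genE v₁ u₁ + (1 - t) * genE v₂ u₂ :=
  stmt_1_general v₁ v₂ u₁ u₂ hu₁s hu₂s t ht₀ ht₁
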